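/- For every substring-free set S of strings over the DNA alphabet, the minimum total weight of a cycle cover of the distance graph G_S is at most OPT(S); that is, w(CYC(G_S)) ≤ OPT(S). -/

import Mathlib

/-- The DNA alphabet. -/
inductive DNA : Type
  | A | T | G | C
  deriving DecidableEq, Repr

/-- Complement of a DNA base: a↔t, g↔c. -/
def DNA.compl : DNA → DNA
  | .A => .T
  | .T => .A
  | .G => .C
  | .C => .G

/-- Strings over the DNA alphabet. -/
abbrev Str : Type := List DNA

/-- Reverse complement of a string. -/
def rc (s : Str) : Str := (s.map DNA.compl).reverse

/-- An approximate solution for the SCS-RC instance `S`: a string containing,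
for each `s ∈ S`, either `s` or its reverse complement as a substring. -/
def ApproxSol (S : Finset Str) (u : Str) : Prop :=
  ∀ s ∈ S, s <:+: u ∨ rc s <:+: u

/-- `OPT S` is the minimum length of an approximate solution for the SCS-RC instance `S`. -/
noncomputable def OPT (S : Finset Str) : ℕ :=
  sInf {n | ∃ u : Str, ApproxSol S u ∧ u.length = n}

/-- `S` is substring-free: no string of `S ∪ S̄^R` is a substring of another. -/
def SubstrFree (S : Finset Str) : Prop :=
  ∀ x, (x ∈ S ∨ rc x ∈ S) → ∀ y, (y ∈ S ∨ rc y ∈ S) → x ≠ y → ¬ x <:+: y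

/-- `ov x y`: the length of the longest string `v` such that `x = u ++ v` and
`y = v ++ w` for nonempty `u`, `w`. -/
noncomputable def ov (x y : Str) : ℕ :=
  sSup {k | ∃ v : Str, v.length = k ∧ (∃ u : Str, u ≠ [] ∧ x = u ++ v) ∧
        (∃ w : Str, w ≠ [] ∧ y = v ++ w)}

/-- `prefStr x y = pref(x, y)`: the prefix of `x` with respect to `y`. -/
noncomputable def prefStr (x y : Str) : Str := x.take (x.length - ov x y)

/-- `distStr x y = dist(x, y) = |x| - ov(x, y)`. -/
noncomputable def distStr (x y : Str) : ℕ := x.length - ov x y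

/-- The merge `⟨x, y⟩ = pref(x, y) ++ y`. -/
noncomputable def mergeStr (x y : Str) : Str := prefStr x y ++ y

/-- `superstr [x1, …, xr] = ⟨x1, …, xr⟩ = pref(x1,x2) ⋯ pref(x_{r-1},x_r) ++ x_r`. -/
noncomputable def superstr : List Str → Str
  | [] => []
  | [x] => x
  | x :: y :: rest => prefStr x y ++ superstr (y :: rest)

/-- `‖S‖`: the total length of the strings of the finite set `S`. -/
def normS (S : Finset Str) : ℕ := ∑ s ∈ S, s.length

/-- Pairs `(x, y)` of strings from the collection `S` or their reverse complements,
with `x = y`, or with `x ≠ y` and `rc x ≠ y`, as considered by MGREEDY-RC. -/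
def ValidPair (S : Finset Str) (x y : Str) : Prop :=
  (x ∈ S ∨ rc x ∈ S) ∧ (y ∈ S ∨ rc y ∈ S) ∧ (x = y ∨ (x ≠ y ∧ rc x ≠ y))

/-- `MGreedyExec S T`: some execution of MGREEDY-RC starting from the collection `S`
(under some tie-breaking among pairs of maximum overlap) produces the set `T`. -/
inductive MGreedyExec : Finset Str → Finset Str → Prop
  | done : MGreedyExec ∅ ∅
  | close (S T : Finset Str) (x : Str)
      (hx : x ∈ S ∨ rc x ∈ S)
      (hmax : ∀ a b, ValidPair S a b → ov a b ≤ ov x x)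
      (h : MGreedyExec (S \ {x, rc x}) T) :
      MGreedyExec S (insert x T)
  | merge (S T : Finset Str) (x y : Str)
      (hx : x ∈ S ∨ rc x ∈ S) (hy : y ∈ S ∨ rc y ∈ S)
      (hne : x ≠ y) (hrc : rc x ≠ y)
      (hmax : ∀ a b, ValidPair S a b → ov a b ≤ ov x y)
      (h : MGreedyExec (insert (mergeStr x y) (S \ {x, rc x, y, rc y})) T) :
      MGreedyExec S T

/-- `GreedyExec S u`: some execution of GREEDY-RC starting from the collection `S`
(under some tie-breaking among pairs of maximum overlap) outputs the string `u`. -/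
inductive GreedyExec : Finset Str → Str → Prop
  | single (x : Str) : GreedyExec {x} x
  | merge (S : Finset Str) (u x y : Str)
      (hx : x ∈ S ∨ rc x ∈ S) (hy : y ∈ S ∨ rc y ∈ S)
      (hne : x ≠ y) (hrc : rc x ≠ y)
      (hmax : ∀ a b, (a ∈ S ∨ rc a ∈ S) → (b ∈ S ∨ rc b ∈ S) → a ≠ b → rc a ≠ b →
        ov a b ≤ ov x y)
      (hcard : 1 < S.card)
      (h : GreedyExec (insert (mergeStr x y) (S \ {x, rc x, y, rc y})) u) :
      GreedyExec S u

/-- Reverse complement of a path: the path of the reverse complements, reversed. -/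
def rcPath (p : List Str) : List Str := (p.map rc).reverse

/-- Valid pairs for the path-level description of MGREEDY-RC, where each collection
element is the path of original strings composing it, its string value being `superstr`. -/
def ValidPairP (P : Finset (List Str)) (p q : List Str) : Prop :=
  (p ∈ P ∨ rcPath p ∈ P) ∧ (q ∈ P ∨ rcPath q ∈ P) ∧
  (superstr p = superstr q ∨ (superstr p ≠ superstr q ∧ rc (superstr p) ≠ superstr q))

/-- `MGreedyCyc P C`: the path-level description of an execution of MGREEDY-RC.
Starting from the collection of paths `P`, merging the paths `p` and `q` (adding the
edge from the last vertex of `p` to the first of `q`) when the corresponding strings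
are merged, and closing the path `p` into the cycle `p` (with the edge from its last
vertex to its first) when the corresponding string is moved to `T`, some execution
produces the set of closed cycles `C`. -/
inductive MGreedyCyc : Finset (List Str) → Finset (List Str) → Prop
  | done : MGreedyCyc ∅ ∅
  | close (P C : Finset (List Str)) (p : List Str)
      (hp : p ∈ P ∨ rcPath p ∈ P)
      (hmax : ∀ q₁ q₂, ValidPairP P q₁ q₂ →
        ov (superstr q₁) (superstr q₂) ≤ ov (superstr p) (superstr p))
      (h : MGreedyCyc (P \ {p, rcPath p}) C) :
      MGreedyCyc P (insert p C)
  | merge (P C : Finset (List Str)) (p q : List Str)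
      (hp : p ∈ P ∨ rcPath p ∈ P) (hq : q ∈ P ∨ rcPath q ∈ P)
      (hne : superstr p ≠ superstr q) (hrc : rc (superstr p) ≠ superstr q)
      (hmax : ∀ q₁ q₂, ValidPairP P q₁ q₂ →
        ov (superstr q₁) (superstr q₂) ≤ ov (superstr p) (superstr q))
      (h : MGreedyCyc (insert (p ++ q) (P \ {p, rcPath p, q, rcPath q})) C) :
      MGreedyCyc P C

/-- The weight of the cycle `x1, …, xr, x1` given by the list `[x1, …, xr]`:
`Σ_{i=1}^{r} dist(x_i, x_{i+1})` with indices modulo `r`. -/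
noncomputable def cycleWeight (c : List Str) : ℕ :=
  ((c.zip (c.rotate 1)).map fun p => distStr p.1 p.2).sum

/-- `C` is a cycle cover of the distance graph `G_S`: a set of vertex-disjoint cycles
on vertices of `S ∪ S̄^R` such that for each `s ∈ S` exactly one of `s` and `rc s`
is contained in the cycles. -/
def IsCycleCover (S : Finset Str) (C : Finset (List Str)) : Prop :=
  (∀ c ∈ C, c ≠ []) ∧
  (∀ c ∈ C, c.Nodup) ∧
  (∀ c ∈ C, ∀ d ∈ C, c ≠ d → ∀ x ∈ c, x ∉ d) ∧
  (∀ c ∈ C, ∀ x ∈ c, x ∈ S ∨ rc x ∈ S) ∧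
  (∀ s ∈ S, Xor' (∃ c ∈ C, s ∈ c) (∃ c ∈ C, rc s ∈ c))

/-- The total weight of a cycle cover. -/
noncomputable def coverWeight (C : Finset (List Str)) : ℕ := ∑ c ∈ C, cycleWeight c

/-- `minCoverWeight S = w(CYC(G_S))`: the minimum total weight of a cycle cover of `G_S`. -/
noncomputable def minCoverWeight (S : Finset Str) : ℕ :=
  sInf {n | ∃ C : Finset (List Str), IsCycleCover S C ∧ coverWeight C = n}

/-- `x` is a factor of `s`: `s = x^i ++ y` for some `i ≥ 1` and some prefix `y` of `x`. -/
def IsFactor (x s : Str) : Prop :=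
  x ≠ [] ∧ ∃ i : ℕ, 1 ≤ i ∧ ∃ y : Str, y <+: x ∧ s = (List.replicate i x).flatten ++ y

/-- `period s`: the length of the shortest factor of `s`. -/
noncomputable def periodStr (s : Str) : ℕ :=
  sInf {k | ∃ x : Str, IsFactor x s ∧ x.length = k}

open Classical in
/-- `factorStr s`: a shortest factor of `s`. -/
noncomputable def factorStr (s : Str) : Str :=
  if h : ∃ x : Str, IsFactor x s ∧ x.length = periodStr s then h.choose else []

/-- Two strings are equivalent if the factor of one is a cyclic shift of the factor
of the other. -/
def EquivStr (x y : Str) : Prop :=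
  ∃ e f : Str, factorStr x = e ++ f ∧ factorStr y = f ++ e

/-!
Take a shortest approximate solution `u` and, for every `s ∈ S`, one of `s`, `s̄^R` occurring in
`u` (the same one for `s` and `s̄^R`). Listed by their positions in `u`, the chosen strings form a
single cycle through one string of each pair. Since no chosen string is a substring of another, a
string `x` starting at `i` and the next one `y` starting at `j > i` satisfy
`dist(x, y) ≤ j - i`, so the cycle weighs at most `|u|`.
-/

lemma DNA.compl_compl (d : DNA) : d.compl.compl = d := by cases d <;> rfl

lemma rc_rc (s : Str) : rc (rc s) = s := by
  simp [rc, List.map_reverse, List.map_map, Function.comp_def, DNA.compl_compl]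

lemma le_ov {x y e v w : Str} (hx : x = e ++ v) (hy : y = v ++ w) (he : e ≠ []) (hw : w ≠ []) :
    v.length ≤ ov x y := by
  refine le_csSup ⟨x.length, ?_⟩ ⟨v, rfl, ⟨e, he, hx⟩, ⟨w, hw, hy⟩⟩
  rintro n ⟨v', rfl, ⟨e', -, rfl⟩, -⟩
  simp

lemma distStr_le_of_append_eq {x y e b d : Str} (h : x ++ b = e ++ y ++ d) (he : e ≠ [])
    (hyx : ¬ y <:+: x) : distStr x y ≤ e.length := by
  rw [List.append_assoc, List.append_eq_append_iff] at h
  rcases h with ⟨a, rfl, -⟩ | ⟨c, rfl, hc⟩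
  · simp only [distStr, List.length_append]
    omega
  rcases List.append_eq_append_iff.mp hc with ⟨a, rfl, -⟩ | ⟨w, rfl, -⟩
  · exact absurd ⟨e, a, by simp⟩ hyx
  rcases eq_or_ne w [] with rfl | hw
  · exact absurd ⟨e, [], by simp⟩ hyx
  have := le_ov (x := e ++ c) (v := c) rfl rfl he hw
  simp only [distStr, List.length_append] at this ⊢
  omega

open Classical in
/-- Start of a chosen occurrence of `x` in `u`; junk value `0` if `x` does not occur. -/
noncomputable def occPos (u x : Str) : ℕ :=
  if h : x <:+: u then h.choose.length else 0

lemma exists_append_eq_of_infix {u x : Str} (h : x <:+: u) :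
    ∃ a b, a ++ x ++ b = u ∧ a.length = occPos u x := by
  obtain ⟨b, hb⟩ := h.choose_spec
  exact ⟨_, b, hb, by rw [occPos, dif_pos h]⟩

lemma occPos_add_length_le {u x : Str} (h : x <:+: u) : occPos u x + x.length ≤ u.length := by
  obtain ⟨a, b, rfl, ha⟩ := exists_append_eq_of_infix h
  simp only [List.length_append]
  omega

lemma occPos_ne {u x y : Str} (hx : x <:+: u) (hy : y <:+: u) (hxy : ¬ x <:+: y)
    (hyx : ¬ y <:+: x) : occPos u x ≠ occPos u y := by
  intro heq
  obtain ⟨a, b, hab, ha⟩ := exists_append_eq_of_infix hx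
  obtain ⟨c, d, hcd, hc⟩ := exists_append_eq_of_infix hy
  rw [← hcd, List.append_assoc, List.append_assoc] at hab
  have hxy' := (List.append_inj hab (by omega)).2
  rcases List.prefix_or_prefix_of_prefix ⟨b, hxy'⟩ ⟨d, rfl⟩ with h | h
  · exact hxy h.isInfix
  · exact hyx h.isInfix

lemma distStr_add_occPos_le {u x y : Str} (hx : x <:+: u) (hy : y <:+: u) (hyx : ¬ y <:+: x)
    (hlt : occPos u x < occPos u y) : distStr x y + occPos u x ≤ occPos u y := by
  obtain ⟨a, b, hab, ha⟩ := exists_append_eq_of_infix hx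
  obtain ⟨c, d, hcd, hc⟩ := exists_append_eq_of_infix hy
  rw [← hcd, List.append_assoc, List.append_assoc, List.append_eq_append_iff] at hab
  rcases hab with ⟨e, rfl, he⟩ | ⟨e, rfl, -⟩
  · have hne : e ≠ [] := by
      rintro rfl
      simp only [List.append_nil] at hc
      omega
    have := distStr_le_of_append_eq (by rw [he, List.append_assoc]) hne hyx
    simp only [List.length_append] at hc
    omega
  · simp only [List.length_append] at ha
    omega

lemma List.zip_cons_append_singleton {α β : Type*} (y : β) :
    ∀ (x : α) (l : List α) (m : List β), l.length = m.length →
      (x :: l).zip (m ++ [y]) = (x :: l).zip m ++ [((x :: l).getLast (cons_ne_nil x l), y)]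
  | _, [], [], _ => rfl
  | x, a :: l, b :: m, h => by
    rw [cons_append, zip_cons_cons, zip_cons_cons,
      zip_cons_append_singleton y a l m (by simpa using h), getLast_cons_cons, cons_append]

lemma cycleWeight_cons (x : Str) (l : List Str) :
    cycleWeight (x :: l) = (((x :: l).zip l).map fun p => distStr p.1 p.2).sum
      + distStr ((x :: l).getLast (List.cons_ne_nil x l)) x := by
  rw [cycleWeight, List.rotate_cons_succ, List.rotate_zero,
    List.zip_cons_append_singleton x x l l rfl]
  simp

lemma List.sum_map_zip_add_le_of_isChain {α : Type*} (f : α → α → ℕ) (g : α → ℕ) :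
    ∀ (x : α) (l : List α), (x :: l).IsChain (fun a b => f a b + g a ≤ g b) →
      (((x :: l).zip l).map fun p => f p.1 p.2).sum + g x
        ≤ g ((x :: l).getLast (cons_ne_nil x l))
  | _, [], _ => by simp
  | x, y :: l, h => by
    rw [isChain_cons_cons] at h
    have := sum_map_zip_add_le_of_isChain f g y l h.2
    simp only [zip_cons_cons, map_cons, sum_cons, getLast_cons_cons]
    omega

lemma cycleWeight_le_length {u : Str} {c : List Str} (hu : ∀ x ∈ c, x <:+: u)
    (hc : c.Pairwise fun x y => occPos u x < occPos u y ∧ ¬ y <:+: x) :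
    cycleWeight c ≤ u.length := by
  rcases c with _ | ⟨x, l⟩
  · simp [cycleWeight]
  have hchain : (x :: l).IsChain fun a b => distStr a b + occPos u a ≤ occPos u b :=
    (hc.imp_of_mem fun ha hb h => distStr_add_occPos_le (hu _ ha) (hu _ hb) h.2 h.1).isChain
  have hpath := List.sum_map_zip_add_le_of_isChain distStr (occPos u) x l hchain
  rw [cycleWeight_cons]
  set z := (x :: l).getLast (List.cons_ne_nil x l)
  have hz := occPos_add_length_le (hu z (List.getLast_mem _))
  have hdist : distStr z x ≤ z.length := Nat.sub_le _ _
  omega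

lemma exists_list_pairwise_occPos_lt (u : Str) (R : Finset Str) (hu : ∀ x ∈ R, x <:+: u)
    (hR : ∀ x ∈ R, ∀ y ∈ R, x ≠ y → ¬ x <:+: y) :
    ∃ c : List Str, c.Nodup ∧ (∀ x, x ∈ c ↔ x ∈ R) ∧
      c.Pairwise fun x y => occPos u x < occPos u y ∧ ¬ y <:+: x := by
  set c := R.toList.mergeSort fun x y => occPos u x ≤ occPos u y
  have hperm : c.Perm R.toList := List.mergeSort_perm _ _
  have hmem : ∀ x, x ∈ c ↔ x ∈ R := fun x => hperm.mem_iff.trans Finset.mem_toList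
  have hsorted : c.Pairwise fun x y => decide (occPos u x ≤ occPos u y) :=
    List.pairwise_mergeSort (fun _ _ _ h₁ h₂ => by simp only [decide_eq_true_eq] at *; omega)
      (fun _ _ => by simp only [Bool.or_eq_true, decide_eq_true_eq]; omega) _
  have hnd : c.Nodup := hperm.nodup_iff.mpr R.nodup_toList
  refine ⟨c, hnd, hmem, (hsorted.and hnd).imp_of_mem fun hx hy ⟨hle, hxy⟩ => ?_⟩
  have hx := (hmem _).mp hx
  have hy := (hmem _).mp hy
  have hyx := hR _ hy _ hx (Ne.symm hxy)
  have hne := occPos_ne (hu _ hx) (hu _ hy) (hR _ hx _ hy hxy) hyx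
  simp only [decide_eq_true_eq] at hle
  exact ⟨lt_of_le_of_ne hle hne, hyx⟩

lemma xor_and_imp_of_ne {α : Type*} (r : α → α → Prop) [Std.Trichotomous r] [Std.Asymm r]
    {a b : α} (hab : a ≠ b) {P Q : Prop} (h : P ∨ Q) :
    Xor' (P ∧ (Q → r a b)) (Q ∧ (P → r b a)) := by
  rcases trichotomous_of r a b with hr | rfl | hr
  · have := Std.Asymm.asymm a b hr
    unfold Xor'
    tauto
  · exact absurd rfl hab
  · have := Std.Asymm.asymm b a hr
    unfold Xor'
    tauto

/-- A well-order on strings decides between `s` and `rc s` when both occur in `u`. -/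
lemma exists_representatives {S : Finset Str} {u : Str} (hrc : ∀ s ∈ S, rc s ≠ s)
    (hu : ApproxSol S u) :
    ∃ R : Finset Str, (∀ x ∈ R, (x ∈ S ∨ rc x ∈ S) ∧ x <:+: u) ∧
      ∀ s ∈ S, Xor' (s ∈ R) (rc s ∈ R) := by
  classical
  refine ⟨(S ∪ S.image rc).filter fun x => x <:+: u ∧ (rc x <:+: u → WellOrderingRel x (rc x)),
    ?_, fun s hs => ?_⟩
  · intro x hx
    simp only [Finset.mem_filter, Finset.mem_union, Finset.mem_image] at hx
    obtain ⟨hxS | ⟨t, ht, rfl⟩, hxu, -⟩ := hx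
    · exact ⟨Or.inl hxS, hxu⟩
    · exact ⟨Or.inr (by rwa [rc_rc]), hxu⟩
  · have hsS : s ∈ S ∪ S.image rc := Finset.mem_union_left _ hs
    have hrcS : rc s ∈ S ∪ S.image rc := Finset.mem_union_right _ (Finset.mem_image_of_mem _ hs)
    simp only [Finset.mem_filter, hsS, hrcS, true_and, rc_rc]
    exact xor_and_imp_of_ne WellOrderingRel (hrc s hs).symm (hu s hs)

lemma isCycleCover_singleton {S : Finset Str} {c : List Str} (hc : c ≠ []) (hnd : c.Nodup)
    (hcS : ∀ x ∈ c, x ∈ S ∨ rc x ∈ S) (hxor : ∀ s ∈ S, Xor' (s ∈ c) (rc s ∈ c)) :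
    IsCycleCover S {c} := by
  refine ⟨by simpa, by simpa, by simp, by simpa, fun s hs => ?_⟩
  simpa using hxor s hs

lemma not_isCycleCover_of_rc_eq_self {S : Finset Str} {s : Str} (hs : s ∈ S) (hss : rc s = s)
    (C : Finset (List Str)) : ¬ IsCycleCover S C := by
  intro hC
  have := hC.2.2.2.2 s hs
  rw [hss] at this
  simp [Xor'] at this

lemma exists_cycleCover_weight_le {S : Finset Str} {u : Str} (hS : SubstrFree S)
    (hrc : ∀ s ∈ S, rc s ≠ s) (hu : ApproxSol S u) :
    ∃ C, IsCycleCover S C ∧ coverWeight C ≤ u.length := by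
  obtain ⟨R, hRu, hxor⟩ := exists_representatives hrc hu
  obtain ⟨c, hnd, hmem, hsorted⟩ := exists_list_pairwise_occPos_lt u R (fun x hx => (hRu x hx).2)
    fun x hx y hy => hS x (hRu x hx).1 y (hRu y hy).1
  rcases eq_or_ne c [] with rfl | hc
  · have hS0 : S = ∅ := Finset.eq_empty_of_forall_notMem fun s hs => by
      simpa [Xor', ← hmem] using hxor s hs
    subst hS0
    exact ⟨∅, by simp [IsCycleCover], by simp [coverWeight]⟩
  refine ⟨{c}, isCycleCover_singleton hc hnd (fun x hx => (hRu x ((hmem x).mp hx)).1)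
    fun s hs => by simpa only [hmem] using hxor s hs, ?_⟩
  rw [coverWeight, Finset.sum_singleton]
  exact cycleWeight_le_length (fun x hx => (hRu x ((hmem x).mp hx)).2) hsorted

lemma exists_approxSol_length_eq_OPT (S : Finset Str) :
    ∃ u, ApproxSol S u ∧ u.length = OPT S := by
  have hsol : ApproxSol S S.toList.flatten := fun s hs =>
    Or.inl (List.infix_of_mem_flatten (Finset.mem_toList.mpr hs))
  exact Nat.sInf_mem (s := {n | ∃ u, ApproxSol S u ∧ u.length = n}) ⟨_, _, hsol, rfl⟩

/-- the minimum total weight of a cycle cover of the distance graph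
`G_S` is at most `OPT(S)`. -/
theorem cycle_cover_weight_le_opt (S : Finset Str) (hS : SubstrFree S) :
    minCoverWeight S ≤ OPT S := by
  obtain ⟨u, hu, hlen⟩ := exists_approxSol_length_eq_OPT S
  by_cases hrc : ∃ s ∈ S, rc s = s
  · -- then `G_S` has no cycle cover at all, and `minCoverWeight S = sInf ∅ = 0`
    obtain ⟨s, hs, hss⟩ := hrc
    have hnone : {n | ∃ C, IsCycleCover S C ∧ coverWeight C = n} = ∅ :=
      Set.eq_empty_of_forall_notMem fun _ ⟨C, hC, _⟩ => not_isCycleCover_of_rc_eq_self hs hss C hC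
    simp [minCoverWeight, hnone]
  push Not at hrc
  obtain ⟨C, hC, hw⟩ := exists_cycleCover_weight_le hS hrc hu
  calc minCoverWeight S ≤ coverWeight C := Nat.sInf_le ⟨C, hC, rfl⟩
    _ ≤ u.length := hw
    _ = OPT S := hlen
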